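/- arXiv:1902.08428 — 2 statements merged into one kernel-verified Lean document; each statement's English description precedes it below -/
import Mathlib

section
/- In the setting of the random code matrix with dual distance d⊥ ≥ 5, the random variable Z_ℓ = z ∑_{j≠k} X_{ℓj} R^(ℓ)_{jk} conj(X_{ℓk}) satisfies E|Z_ℓ|² ≤ C|z|²/(n η²), where z = E + iη and C is an absolute constant. -/
open Finset Matrix

/-- The `p × n` matrix `X = n^{-1/2} ψ(rows)` formed from rows `d i ∈ F_q^n`. -/
noncomputable def codeMatrix {F : Type*} [Field F] (ψ : AddChar F ℂ) (p n : ℕ)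
    (d : Fin p → (Fin n → F)) : Matrix (Fin p) (Fin n) ℂ :=
  fun i j => ψ (d i j) / (Real.sqrt n : ℂ)

/-- `X^(ℓ)`: the matrix `X` with row `ℓ` zeroed. -/
def zeroRow {p n : ℕ} (ℓ : Fin p) (X : Matrix (Fin p) (Fin n) ℂ) :
    Matrix (Fin p) (Fin n) ℂ :=
  fun i j => if i = ℓ then 0 else X i j

/-- The resolvent `R^(ℓ)(z) = (X^(ℓ)* X^(ℓ) − z I_n)⁻¹`. -/
noncomputable def resolventMinor {F : Type*} [Field F] (ψ : AddChar F ℂ) (p n : ℕ)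
    (d : Fin p → (Fin n → F)) (ℓ : Fin p) (z : ℂ) : Matrix (Fin n) (Fin n) ℂ :=
  ((zeroRow ℓ (codeMatrix ψ p n d))ᴴ * zeroRow ℓ (codeMatrix ψ p n d) - z • 1)⁻¹

/-- `Z_ℓ = z ∑_{j≠k} X_{ℓj} R^(ℓ)_{jk} conj(X_{ℓk})`. -/
noncomputable def Zl {F : Type*} [Field F] (ψ : AddChar F ℂ) (p n : ℕ)
    (d : Fin p → (Fin n → F)) (ℓ : Fin p) (z : ℂ) : ℂ :=
  z * ∑ j, ∑ k, if j ≠ k then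
    codeMatrix ψ p n d ℓ j * resolventMinor ψ p n d ℓ z j k *
      (starRingEnd ℂ) (codeMatrix ψ p n d ℓ k)
    else 0


section Aux

open Classical in
lemma char_sum_submodule {F : Type} [Field F] [Fintype F] {n : ℕ}
    (C : Submodule F (Fin n → F)) (ψ : AddChar F ℂ) (hψ : ψ ≠ 1) (a : Fin n → F) :
    ∑ c : C, ψ (∑ i, a i * (c : Fin n → F) i)
      = if (∀ c ∈ C, ∑ i, a i * c i = 0) then (Fintype.card C : ℂ) else 0 := by
  set f : C →+ F :=
    { toFun := fun c => ∑ i, a i * (c : Fin n → F) i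
      map_zero' := by simp
      map_add' := by
        intro x y
        simp [mul_add, Finset.sum_add_distrib] } with hf
  have key : (ψ.compAddMonoidHom f = 0) ↔ (∀ c ∈ C, ∑ i, a i * c i = 0) := by
    constructor
    · intro h c hc
      by_contra hne
      have hall : ∀ y : F, ψ y = 1 := by
        intro y
        have h1 : ∀ u : C, ψ (f u) = 1 := fun u => by
          have := DFunLike.congr_fun h u
          simpa using this
        have hy := h1 ((y * (∑ i, a i * c i)⁻¹) • ⟨c, hc⟩)
        have hfy : f ((y * (∑ i, a i * c i)⁻¹) • (⟨c, hc⟩ : C)) = y := by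
          simp only [hf, AddMonoidHom.coe_mk, ZeroHom.coe_mk]
          rw [show ∀ u : C, ∀ x : F, ((x • u : C) : Fin n → F) = x • (u : Fin n → F)
            from fun u x => rfl]
          simp only [Pi.smul_apply, smul_eq_mul]
          rw [show (∑ i, a i * ((y * (∑ i, a i * c i)⁻¹) * c i))
              = (y * (∑ i, a i * c i)⁻¹) * ∑ i, a i * c i by
            rw [Finset.mul_sum]; exact Finset.sum_congr rfl fun i _ => by ring]
          field_simp
        rw [hfy] at hy
        exact hy
      exact hψ (AddChar.eq_one_iff.2 hall)
    · intro h
      ext u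
      simp only [AddChar.compAddMonoidHom_apply, AddChar.zero_apply]
      have : f u = 0 := h u u.2
      rw [this, AddChar.map_zero_eq_one]
  calc ∑ c : C, ψ (∑ i, a i * (c : Fin n → F) i)
      = ∑ c : C, (ψ.compAddMonoidHom f) c := by
        exact Finset.sum_congr rfl fun c _ => rfl
    _ = if ψ.compAddMonoidHom f = 0 then ((Fintype.card C : ℕ) : ℂ) else 0 :=
        AddChar.sum_eq_ite _
    _ = _ := by rw [if_congr key rfl rfl]

lemma pairing_lemma {F : Type} [Field F] {n : ℕ} {j k s t : Fin n}
    (hjk : j ≠ k) (hst : s ≠ t)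
    (h : ∀ i : Fin n, (if i = j then (1:F) else 0) - (if i = k then 1 else 0)
        - (if i = s then 1 else 0) + (if i = t then 1 else 0) = 0) :
    (s = j ∧ t = k) ∨ (s = k ∧ t = j) := by
  have hsjk : s = j ∨ s = k := by
    by_contra hc
    push_neg at hc
    have := h s
    simp [hc.1, hc.2, hst] at this
  rcases hsjk with hs | hs
  · left
    refine ⟨hs, ?_⟩
    by_contra htk
    have htj : t ≠ j := by rw [← hs]; exact fun e => hst e.symm
    have := h t
    simp [htk, htj, hs] at this
  · right
    refine ⟨hs, ?_⟩
    by_contra htj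
    have htk : t ≠ k := by rw [← hs]; exact fun e => hst e.symm
    have := h t
    simp [htk, htj, hs] at this

lemma star_dotProduct_self {m : ℕ} (w : Fin m → ℂ) :
    star w ⬝ᵥ w = ((∑ i, Complex.normSq (w i) : ℝ) : ℂ) := by
  simp only [dotProduct, Pi.star_apply, RCLike.star_def]
  push_cast
  exact Finset.sum_congr rfl fun i _ => by rw [mul_comm, Complex.mul_conj]

lemma resolvent_det_ne_zero {p n : ℕ} (B : Matrix (Fin p) (Fin n) ℂ) {z : ℂ}
    (hz : 0 < z.im) : (Bᴴ * B - z • (1 : Matrix (Fin n) (Fin n) ℂ)).det ≠ 0 := by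
  intro h0
  obtain ⟨v, hv, hMv⟩ := (Matrix.exists_mulVec_eq_zero_iff).2 h0
  have h1 : (Bᴴ * B) *ᵥ v = z • v := by
    rw [Matrix.sub_mulVec, Matrix.smul_mulVec, Matrix.one_mulVec, sub_eq_zero] at hMv
    exact hMv
  have h2 : star (B *ᵥ v) ⬝ᵥ (B *ᵥ v) = z * (star v ⬝ᵥ v) := by
    rw [Matrix.star_mulVec, ← Matrix.dotProduct_mulVec, Matrix.mulVec_mulVec, h1,
      dotProduct_smul, smul_eq_mul]
  rw [star_dotProduct_self, star_dotProduct_self] at h2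
  have hvpos : 0 < ∑ i, Complex.normSq (v i) := by
    obtain ⟨i, hi⟩ := Function.ne_iff.1 hv
    exact Finset.sum_pos' (fun i _ => Complex.normSq_nonneg _)
      ⟨i, Finset.mem_univ i, Complex.normSq_pos.2 hi⟩
  have him := congrArg Complex.im h2
  simp only [Complex.ofReal_im, Complex.mul_im, Complex.ofReal_re] at him
  nlinarith [hvpos, hz]

lemma resolvent_frob {p n : ℕ} (B : Matrix (Fin p) (Fin n) ℂ) {z : ℂ} (hz : 0 < z.im) :
    ∑ j, ∑ k, ‖((Bᴴ * B - z • (1 : Matrix (Fin n) (Fin n) ℂ))⁻¹) j k‖ ^ 2 ≤ n / z.im ^ 2 := by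
  set M : Matrix (Fin n) (Fin n) ℂ := Bᴴ * B - z • 1 with hM
  set R : Matrix (Fin n) (Fin n) ℂ := M⁻¹ with hR
  have hdet : IsUnit M.det := isUnit_iff_ne_zero.2 (resolvent_det_ne_zero B hz)
  have hMR : M * R = 1 := Matrix.mul_nonsing_inv M hdet
  have hRM : R * M = 1 := Matrix.nonsing_inv_mul M hdet
  have hMHRH : Mᴴ * Rᴴ = 1 := by
    have := congrArg conjTranspose hRM
    simpa using this
  have hMHsub : Mᴴ - M = (z - (starRingEnd ℂ) z) • (1 : Matrix (Fin n) (Fin n) ℂ) := by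
    have hc : Mᴴ = Bᴴ * B - (starRingEnd ℂ) z • 1 := by
      rw [hM]
      simp [Matrix.conjTranspose_sub, Matrix.conjTranspose_smul, Matrix.conjTranspose_mul]
    rw [hc, hM, sub_smul]
    abel
  have key : R - Rᴴ = (z - (starRingEnd ℂ) z) • (R * Rᴴ) := by
    calc R - Rᴴ = R * (Mᴴ * Rᴴ) - (R * M) * Rᴴ := by rw [hMHRH, hRM]; simp
      _ = R * ((Mᴴ - M) * Rᴴ) := by noncomm_ring
      _ = (z - (starRingEnd ℂ) z) • (R * Rᴴ) := by
          rw [hMHsub, Matrix.smul_mul, Matrix.one_mul, Matrix.mul_smul]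
  have diag : ∀ j, (R j j).im = z.im * ∑ k, Complex.normSq (R j k) := by
    intro j
    have hjj := congrArg (fun A : Matrix (Fin n) (Fin n) ℂ => A j j) key
    simp only [Matrix.sub_apply, Matrix.smul_apply, smul_eq_mul] at hjj
    have hRRH : (R * Rᴴ) j j = ((∑ k, Complex.normSq (R j k) : ℝ) : ℂ) := by
      simp only [Matrix.mul_apply, Matrix.conjTranspose_apply, RCLike.star_def,
        Complex.mul_conj]
      push_cast
      rfl
    have hRHd : Rᴴ j j = (starRingEnd ℂ) (R j j) := rfl
    rw [hRRH, hRHd, Complex.sub_conj, Complex.sub_conj] at hjj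
    have him := congrArg Complex.im hjj
    simp only [Complex.mul_im, Complex.mul_re, Complex.I_re, Complex.I_im,
      Complex.ofReal_re, Complex.ofReal_im] at him
    have h2 : 2 * (R j j).im = 2 * z.im * ∑ k, Complex.normSq (R j k) := by linarith
    linarith
  have hPle : ∀ j, ∑ k, Complex.normSq (R j k) ≤ 1 / z.im ^ 2 := by
    intro j
    set P := ∑ k, Complex.normSq (R j k) with hP
    have hPnonneg : 0 ≤ P := Finset.sum_nonneg fun k _ => Complex.normSq_nonneg _
    have h1 : Complex.normSq (R j j) ≤ P :=
      Finset.single_le_sum (fun k _ => Complex.normSq_nonneg _) (Finset.mem_univ j)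
    have h2 : z.im * P ≤ ‖R j j‖ := by
      rw [show z.im * P = (R j j).im from (diag j).symm]
      exact Complex.im_le_norm _
    have h3 : ‖R j j‖ ^ 2 ≤ P := by rw [Complex.sq_norm]; exact h1
    have h4 : z.im * ‖R j j‖ ^ 2 ≤ ‖R j j‖ :=
      le_trans (by nlinarith [mul_le_mul_of_nonneg_left h3 hz.le]) h2
    have h5 : z.im * ‖R j j‖ ≤ 1 := by
      rcases eq_or_lt_of_le (norm_nonneg (R j j)) with h | h
      · rw [← h]; simp
      · nlinarith [h4, h]
    have h6 : z.im * P ≤ 1 / z.im := by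
      refine le_trans h2 ?_
      rw [le_div_iff₀ hz]
      linarith [h5]
    rw [le_div_iff₀ (by positivity : (0:ℝ) < z.im ^ 2)]
    nlinarith [h6, hz]
  calc ∑ j, ∑ k, ‖R j k‖ ^ 2
      = ∑ j : Fin n, ∑ k, Complex.normSq (R j k) :=
        Finset.sum_congr rfl fun j _ => Finset.sum_congr rfl fun k _ => Complex.sq_norm _
    _ ≤ ∑ j : Fin n, 1 / z.im ^ 2 := Finset.sum_le_sum fun j _ => hPle j
    _ = n / z.im ^ 2 := by simp [Finset.sum_const]; ring

lemma sum_comm4 {M : Type*} [AddCommMonoid M] {ι : Type*} [Fintype ι] (f : ι → ι → ι → ι → M) :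
    ∑ a, ∑ b, ∑ c, ∑ d, f a b c d = ∑ c, ∑ d, ∑ a, ∑ b, f a b c d := by
  calc ∑ a, ∑ b, ∑ c, ∑ d, f a b c d
      = ∑ a, ∑ c, ∑ b, ∑ d, f a b c d :=
        Finset.sum_congr rfl fun a _ => Finset.sum_comm
    _ = ∑ c, ∑ a, ∑ b, ∑ d, f a b c d := Finset.sum_comm
    _ = ∑ c, ∑ a, ∑ d, ∑ b, f a b c d :=
        Finset.sum_congr rfl fun c _ => Finset.sum_congr rfl fun a _ => Finset.sum_comm
    _ = ∑ c, ∑ d, ∑ a, ∑ b, f a b c d :=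
        Finset.sum_congr rfl fun c _ => Finset.sum_comm

set_option maxHeartbeats 1600000 in
open Classical in
lemma inner_sum_bound {F : Type} [Field F] [Fintype F] {n : ℕ} (hn : 0 < n)
    (C : Submodule F (Fin n → F)) (ψ : AddChar F ℂ) (hψ : ψ ≠ 1)
    (hdual : ∀ a : Fin n → F, (∀ c ∈ C, ∑ i, a i * c i = 0) → a ≠ 0 → 5 ≤ hammingNorm a)
    (R : Matrix (Fin n) (Fin n) ℂ) :
    ∑ c : C, ‖∑ j, ∑ k, if j ≠ k then
        (ψ ((c : Fin n → F) j) / (Real.sqrt n : ℂ)) * R j k *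
          (starRingEnd ℂ) (ψ ((c : Fin n → F) k) / (Real.sqrt n : ℂ)) else 0‖ ^ 2
      ≤ (Fintype.card C) * (2 * ∑ j, ∑ k, ‖R j k‖ ^ 2) / (n : ℝ) ^ 2 := by
  set u : ℂ := ((Real.sqrt n : ℝ) : ℂ) with hu
  have hu2 : u ^ 2 = (n : ℂ) := by
    rw [hu, ← Complex.ofReal_pow, Real.sq_sqrt (Nat.cast_nonneg n)]
    norm_cast
  set g : C → Fin n → Fin n → ℂ := fun c j k => if j ≠ k then
      (ψ ((c : Fin n → F) j) / u) * R j k *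
        (starRingEnd ℂ) (ψ ((c : Fin n → F) k) / u) else 0 with hg
  set S : C → ℂ := fun c => ∑ j, ∑ k, g c j k with hS
  set W : Fin n → Fin n → Fin n → Fin n → ℂ :=
    fun j k s t => ∑ c : C, g c j k * (starRingEnd ℂ) (g c s t) with hW
  set T : ℂ := ∑ c : C, S c * (starRingEnd ℂ) (S c) with hT
  -- step 1
  have step1 : ∑ c : C, ‖S c‖ ^ 2 = T.re := by
    rw [hT, Complex.re_sum]
    refine Finset.sum_congr rfl fun c _ => ?_
    rw [Complex.mul_conj, Complex.ofReal_re, Complex.sq_norm]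
  -- step 2
  have step2 : T = ∑ j, ∑ k, ∑ s, ∑ t, W j k s t := by
    have e1 : ∀ c : C, S c * (starRingEnd ℂ) (S c)
        = ∑ j, ∑ k, ∑ s, ∑ t, g c j k * (starRingEnd ℂ) (g c s t) := by
      intro c
      simp only [hS, map_sum, Finset.sum_mul, Finset.mul_sum]
      exact sum_comm4 fun s t j k => g c j k * (starRingEnd ℂ) (g c s t)
    calc T = ∑ c : C, ∑ j, ∑ k, ∑ s, ∑ t, g c j k * (starRingEnd ℂ) (g c s t) :=
          Finset.sum_congr rfl fun c _ => e1 c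
      _ = ∑ j, ∑ c : C, ∑ k, ∑ s, ∑ t, _ := Finset.sum_comm
      _ = ∑ j, ∑ k, ∑ c : C, ∑ s, ∑ t, _ :=
          Finset.sum_congr rfl fun j _ => Finset.sum_comm
      _ = ∑ j, ∑ k, ∑ s, ∑ c : C, ∑ t, _ :=
          Finset.sum_congr rfl fun j _ => Finset.sum_congr rfl fun k _ => Finset.sum_comm
      _ = ∑ j, ∑ k, ∑ s, ∑ t, W j k s t :=
          Finset.sum_congr rfl fun j _ => Finset.sum_congr rfl fun k _ =>
            Finset.sum_congr rfl fun s _ => Finset.sum_comm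
  -- step 3 : bound each W
  have step3 : ∀ j k s t, ‖W j k s t‖ ≤
      (if (s = j ∧ t = k) ∨ (s = k ∧ t = j) then
        (Fintype.card C : ℝ) * (‖R j k‖ * ‖R s t‖) / (n:ℝ)^2 else 0) := by
    intro j k s t
    have hrhs : (0:ℝ) ≤ (if (s = j ∧ t = k) ∨ (s = k ∧ t = j) then
        (Fintype.card C : ℝ) * (‖R j k‖ * ‖R s t‖) / (n:ℝ)^2 else 0) := by
      split <;> positivity
    by_cases hjk : j = k
    · have : W j k s t = 0 := by
        rw [hW]
        refine Finset.sum_eq_zero fun c _ => ?_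
        simp [hg, hjk]
      rw [this]
      simpa using hrhs
    by_cases hst : s = t
    · have : W j k s t = 0 := by
        rw [hW]
        refine Finset.sum_eq_zero fun c _ => ?_
        simp [hg, hst]
      rw [this]
      simpa using hrhs
    -- main case
    set avec : Fin n → F := fun i => (if i = j then (1:F) else 0) - (if i = k then 1 else 0)
        - (if i = s then 1 else 0) + (if i = t then 1 else 0) with havec
    have hsum_a : ∀ c : Fin n → F, ∑ i, avec i * c i = c j + -(c k) + -(c s) + c t := by
      intro c
      have h1 : ∀ i, avec i * c i = ((if i = j then c i else 0) - (if i = k then c i else 0)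
          - (if i = s then c i else 0)) + (if i = t then c i else 0) := by
        intro i
        simp only [havec, sub_mul, add_mul, ite_mul, one_mul, zero_mul]
      rw [Finset.sum_congr rfl fun i _ => h1 i]
      rw [Finset.sum_add_distrib, Finset.sum_sub_distrib, Finset.sum_sub_distrib]
      rw [Finset.sum_ite_eq' Finset.univ j c, Finset.sum_ite_eq' Finset.univ k c,
        Finset.sum_ite_eq' Finset.univ s c, Finset.sum_ite_eq' Finset.univ t c]
      simp only [Finset.mem_univ, if_true]
      ring
    have expand : ∀ c : C, g c j k * (starRingEnd ℂ) (g c s t)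
        = ψ (∑ i, avec i * (c : Fin n → F) i) * (R j k * (starRingEnd ℂ) (R s t)) / (u^2)^2 := by
      intro c
      rw [hsum_a ((c : Fin n → F))]
      have e1 : g c j k = ψ ((c : Fin n → F) j) / u * R j k *
          (starRingEnd ℂ) (ψ ((c : Fin n → F) k) / u) := by
        simp only [hg]
        rw [if_pos hjk]
      have e2 : g c s t = ψ ((c : Fin n → F) s) / u * R s t *
          (starRingEnd ℂ) (ψ ((c : Fin n → F) t) / u) := by
        simp only [hg]
        rw [if_pos hst]
      have hconj : (starRingEnd ℂ) u = u := by rw [hu]; exact Complex.conj_ofReal _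
      rw [e1, e2, AddChar.map_add_eq_mul, AddChar.map_add_eq_mul, AddChar.map_add_eq_mul,
        AddChar.map_neg_eq_conj, AddChar.map_neg_eq_conj]
      simp only [_root_.map_mul, map_div₀, map_inv₀, Complex.conj_conj, hconj]
      ring
    have hWval : W j k s t = (if (∀ v ∈ C, ∑ i, avec i * v i = 0) then (Fintype.card C : ℂ)
        else 0) * (R j k * (starRingEnd ℂ) (R s t)) / (u^2)^2 := by
      rw [hW]
      calc ∑ c : C, g c j k * (starRingEnd ℂ) (g c s t)
          = ∑ c : C, ψ (∑ i, avec i * (c : Fin n → F) i) *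
              (R j k * (starRingEnd ℂ) (R s t)) / (u^2)^2 :=
            Finset.sum_congr rfl fun c _ => expand c
        _ = (∑ c : C, ψ (∑ i, avec i * (c : Fin n → F) i)) *
              (R j k * (starRingEnd ℂ) (R s t)) / (u^2)^2 := by
            rw [← Finset.sum_div, ← Finset.sum_mul]
        _ = _ := by rw [char_sum_submodule C ψ hψ avec]
    by_cases hcond : ∀ v ∈ C, ∑ i, avec i * v i = 0
    · have havec0 : avec = 0 := by
        by_contra hne
        have h5 := hdual avec hcond hne
        have hle : hammingNorm avec ≤ 4 := by
          have hsub : ∀ i, avec i ≠ 0 → i ∈ ({j, k, s, t} : Finset (Fin n)) := by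
            intro i hi
            by_contra hmem
            simp only [Finset.mem_insert, Finset.mem_singleton, not_or] at hmem
            exact hi (by simp [havec, hmem.1, hmem.2.1, hmem.2.2.1, hmem.2.2.2])
          calc hammingNorm avec ≤ ({j, k, s, t} : Finset (Fin n)).card := by
                unfold hammingNorm
                apply Finset.card_le_card
                intro i hi
                simp only [Finset.mem_filter, Finset.mem_univ, true_and] at hi
                exact hsub i hi
            _ ≤ 4 := by
                refine le_trans (Finset.card_insert_le _ _) ?_
                refine le_trans (Nat.add_le_add_right (Finset.card_insert_le _ _) 1) ?_
                refine le_trans (Nat.add_le_add_right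
                  (Nat.add_le_add_right (Finset.card_insert_le _ _) 1) 1) ?_
                simp
        omega
      have hpair : (s = j ∧ t = k) ∨ (s = k ∧ t = j) := by
        refine pairing_lemma (F := F) hjk hst fun i => ?_
        have := congrFun havec0 i
        simpa [havec] using this
      rw [if_pos hpair, hWval, if_pos hcond, hu2]
      refine le_of_eq ?_
      rw [norm_div, norm_mul, norm_mul, Complex.norm_conj, Complex.norm_natCast,
        norm_pow, Complex.norm_natCast]
    · rw [hWval, if_neg hcond]
      simp only [zero_mul, zero_div, norm_zero]
      exact hrhs
  -- step 4 : sum the bounds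
  have hcard0 : (0:ℝ) ≤ (Fintype.card C : ℝ) := Nat.cast_nonneg _
  have hn2 : (0:ℝ) < (n:ℝ)^2 := by positivity
  set K : ℝ := ∑ j, ∑ k, ‖R j k‖ ^ 2 with hK
  have hKnn : 0 ≤ K := Finset.sum_nonneg fun j _ => Finset.sum_nonneg fun k _ => by positivity
  have h1 : ∀ j k : Fin n, ∑ s, ∑ t, (if (s = j ∧ t = k) ∨ (s = k ∧ t = j) then
        (Fintype.card C : ℝ) * (‖R j k‖ * ‖R s t‖) / (n:ℝ)^2 else 0)
      ≤ (Fintype.card C : ℝ) * (‖R j k‖ * ‖R j k‖) / (n:ℝ)^2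
        + (Fintype.card C : ℝ) * (‖R j k‖ * ‖R k j‖) / (n:ℝ)^2 := by
    intro j k
    have hpt : ∀ s t : Fin n, (if (s = j ∧ t = k) ∨ (s = k ∧ t = j) then
          (Fintype.card C : ℝ) * (‖R j k‖ * ‖R s t‖) / (n:ℝ)^2 else 0)
        ≤ (if s = j ∧ t = k then
            (Fintype.card C : ℝ) * (‖R j k‖ * ‖R s t‖) / (n:ℝ)^2 else 0)
          + (if s = k ∧ t = j then
            (Fintype.card C : ℝ) * (‖R j k‖ * ‖R s t‖) / (n:ℝ)^2 else 0) := by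
      intro s t
      have ha0 : (0:ℝ) ≤ (if s = j ∧ t = k then
          (Fintype.card C : ℝ) * (‖R j k‖ * ‖R s t‖) / (n:ℝ)^2 else 0) := by
        split <;> positivity
      have hb0 : (0:ℝ) ≤ (if s = k ∧ t = j then
          (Fintype.card C : ℝ) * (‖R j k‖ * ‖R s t‖) / (n:ℝ)^2 else 0) := by
        split <;> positivity
      by_cases ha : s = j ∧ t = k
      · rw [if_pos (Or.inl ha), if_pos ha]
        linarith
      · by_cases hb : s = k ∧ t = j
        · rw [if_pos (Or.inr hb), if_neg ha, if_pos hb]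
          linarith
        · rw [if_neg (by tauto), if_neg ha, if_neg hb]
          linarith
    refine le_trans (Finset.sum_le_sum fun s _ => Finset.sum_le_sum fun t _ => hpt s t) ?_
    have hsplit : (∑ s, ∑ t, ((if s = j ∧ t = k then
        (Fintype.card C : ℝ) * (‖R j k‖ * ‖R s t‖) / (n:ℝ)^2 else 0)
        + (if s = k ∧ t = j then
        (Fintype.card C : ℝ) * (‖R j k‖ * ‖R s t‖) / (n:ℝ)^2 else 0)))
      = (∑ s, ∑ t, (if s = j ∧ t = k then
        (Fintype.card C : ℝ) * (‖R j k‖ * ‖R s t‖) / (n:ℝ)^2 else 0))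
        + (∑ s, ∑ t, (if s = k ∧ t = j then
        (Fintype.card C : ℝ) * (‖R j k‖ * ‖R s t‖) / (n:ℝ)^2 else 0)) := by
      simp only [Finset.sum_add_distrib]
    rw [hsplit]
    have e1 : (∑ s, ∑ t, (if s = j ∧ t = k then
        (Fintype.card C : ℝ) * (‖R j k‖ * ‖R s t‖) / (n:ℝ)^2 else 0))
        = (Fintype.card C : ℝ) * (‖R j k‖ * ‖R j k‖) / (n:ℝ)^2 := by
      simp [ite_and, Finset.sum_ite_eq' Finset.univ]
    have e2 : (∑ s, ∑ t, (if s = k ∧ t = j then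
        (Fintype.card C : ℝ) * (‖R j k‖ * ‖R s t‖) / (n:ℝ)^2 else 0))
        = (Fintype.card C : ℝ) * (‖R j k‖ * ‖R k j‖) / (n:ℝ)^2 := by
      simp [ite_and, Finset.sum_ite_eq' Finset.univ]
    rw [e1, e2]
  have h2 : ∑ j, ∑ k, ‖R j k‖ * ‖R k j‖ ≤ K := by
    calc ∑ j, ∑ k, ‖R j k‖ * ‖R k j‖
        ≤ ∑ j, ∑ k, (‖R j k‖ ^ 2 + ‖R k j‖ ^ 2) / 2 :=
          Finset.sum_le_sum fun j _ => Finset.sum_le_sum fun k _ => by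
            nlinarith [sq_nonneg (‖R j k‖ - ‖R k j‖)]
      _ = ((∑ j, ∑ k, ‖R j k‖ ^ 2) + (∑ j, ∑ k, ‖R k j‖ ^ 2)) / 2 := by
          simp only [add_div, Finset.sum_add_distrib, Finset.sum_div]
      _ = K := by
          rw [show (∑ j, ∑ k, ‖R k j‖ ^ 2) = ∑ j, ∑ k, ‖R j k‖ ^ 2
            from Finset.sum_comm]
          rw [← hK]
          ring
  -- assemble
  have habsT : ‖T‖ ≤ ∑ j, ∑ k, ∑ s, ∑ t, ‖W j k s t‖ := by
    rw [step2]
    refine le_trans (norm_sum_le _ _) (Finset.sum_le_sum fun j _ => ?_)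
    refine le_trans (norm_sum_le _ _) (Finset.sum_le_sum fun k _ => ?_)
    refine le_trans (norm_sum_le _ _) (Finset.sum_le_sum fun s _ => ?_)
    exact norm_sum_le _ _
  calc ∑ c : C, ‖S c‖ ^ 2 = T.re := step1
    _ ≤ ‖T‖ := Complex.re_le_norm T
    _ ≤ ∑ j, ∑ k, ∑ s, ∑ t, ‖W j k s t‖ := habsT
    _ ≤ ∑ j, ∑ k, ∑ s, ∑ t, (if (s = j ∧ t = k) ∨ (s = k ∧ t = j) then
          (Fintype.card C : ℝ) * (‖R j k‖ * ‖R s t‖) / (n:ℝ)^2 else 0) :=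
        Finset.sum_le_sum fun j _ => Finset.sum_le_sum fun k _ =>
          Finset.sum_le_sum fun s _ => Finset.sum_le_sum fun t _ => step3 j k s t
    _ ≤ ∑ j, ∑ k, ((Fintype.card C : ℝ) * (‖R j k‖ * ‖R j k‖) / (n:ℝ)^2
          + (Fintype.card C : ℝ) * (‖R j k‖ * ‖R k j‖) / (n:ℝ)^2) :=
        Finset.sum_le_sum fun j _ => Finset.sum_le_sum fun k _ => h1 j k
    _ ≤ (Fintype.card C) * (2 * K) / (n : ℝ)^2 := by
        have expand2 : ∑ j, ∑ k, ((Fintype.card C : ℝ) *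
              (‖R j k‖ * ‖R j k‖) / (n:ℝ)^2
              + (Fintype.card C : ℝ) * (‖R j k‖ * ‖R k j‖) / (n:ℝ)^2)
            = (Fintype.card C : ℝ) * K / (n:ℝ)^2 + (Fintype.card C : ℝ)
              * (∑ j, ∑ k, ‖R j k‖ * ‖R k j‖) / (n:ℝ)^2 := by
          rw [hK]
          simp only [Finset.sum_add_distrib, Finset.mul_sum, Finset.sum_div, pow_two]
        rw [expand2]
        rw [← add_div, div_le_div_iff₀ hn2 hn2]
        nlinarith [mul_le_mul_of_nonneg_left h2 hcard0, hn2, hcard0, hKnn]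

end Aux

open Classical in
/-- Second-moment bound: in the random code-matrix setting with dual distance at
least 5, `E|Z_ℓ|² ≤ C |z|²/(n η²)` for an absolute constant `C`, where `η = Im z`. -/
theorem Zl_second_moment_bound :
    ∃ C₀ : ℝ, 0 < C₀ ∧
      ∀ (F : Type) (_ : Field F) (_ : Fintype F) (n p : ℕ), 0 < n →
        ∀ (C : Submodule F (Fin n → F)) (ψ : AddChar F ℂ), ψ ≠ 1 →
          (∀ a : Fin n → F,
            (∀ c ∈ C, ∑ i, a i * c i = 0) → a ≠ 0 → 5 ≤ hammingNorm a) →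
          ∀ (ℓ : Fin p) (z : ℂ), 0 < z.im →
            ((Fintype.card C : ℝ) ^ p)⁻¹ *
                ∑ d : Fin p → C, ‖Zl ψ p n (fun i => (d i : Fin n → F)) ℓ z‖ ^ 2 ≤
              C₀ * ‖z‖ ^ 2 / (n * z.im ^ 2) := by
  classical
  refine ⟨2, by norm_num, ?_⟩
  intro F _ _ n p hn C ψ hψ hdual ℓ z hz
  set η := z.im with hη
  have hn0 : (n:ℝ) ≠ 0 := Nat.cast_ne_zero.2 hn.ne'
  have hη0 : η ≠ 0 := ne_of_gt hz
  have hC1 : 0 < (Fintype.card C : ℝ) := by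
    have : 0 < Fintype.card C := @Fintype.card_pos _ _ ⟨(0 : C)⟩
    exact_mod_cast this
  set X : ℝ := 2 * ‖z‖ ^ 2 / (n * η ^ 2) with hX
  have hXnn : 0 ≤ X := by positivity
  set e := Equiv.piSplitAt ℓ (fun _ : Fin p => (C : Type _))
  have hsum : ∑ d : Fin p → C,
      ‖Zl ψ p n (fun i => ((d i : Fin n → F))) ℓ z‖ ^ 2
      = ∑ d' : {j : Fin p // j ≠ ℓ} → C, ∑ c : C,
        ‖Zl ψ p n (fun i => ((e.symm (c, d') i : Fin n → F))) ℓ z‖ ^ 2 := by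
    rw [← Equiv.sum_comp e.symm
      (fun d => ‖Zl ψ p n (fun i => ((d i : Fin n → F))) ℓ z‖ ^ 2)]
    rw [Fintype.sum_prod_type]
    exact Finset.sum_comm
  have hinner : ∀ d' : {j : Fin p // j ≠ ℓ} → C,
      (∑ c : C, ‖Zl ψ p n (fun i => ((e.symm (c, d') i : Fin n → F))) ℓ z‖ ^ 2)
      ≤ (Fintype.card C : ℝ) * X := by
    intro d'
    have hDl : ∀ c : C, e.symm (c, d') ℓ = c := fun c => dif_pos rfl
    have hDoff : ∀ (c c' : C) (i : Fin p), i ≠ ℓ → e.symm (c, d') i = e.symm (c', d') i := by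
      intro c c' i h
      show dite _ _ _ = dite _ _ _
      rw [dif_neg h, dif_neg h]
    have hres : ∀ c : C, resolventMinor ψ p n (fun i => ((e.symm (c, d') i : Fin n → F))) ℓ z
        = resolventMinor ψ p n (fun i => ((e.symm (0, d') i : Fin n → F))) ℓ z := by
      intro c
      have hzr : zeroRow ℓ (codeMatrix ψ p n (fun i => ((e.symm (c, d') i : Fin n → F))))
          = zeroRow ℓ (codeMatrix ψ p n (fun i => ((e.symm (0, d') i : Fin n → F)))) := by
        funext i x
        simp only [zeroRow, codeMatrix]
        split
        · rfl
        · rw [hDoff c 0 i (by assumption)]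
      unfold resolventMinor
      rw [hzr]
    set R0 := resolventMinor ψ p n (fun i => ((e.symm (0, d') i : Fin n → F))) ℓ z with hR0
    have hZl : ∀ c : C, Zl ψ p n (fun i => ((e.symm (c, d') i : Fin n → F))) ℓ z
        = z * ∑ j, ∑ k, if j ≠ k then
            (ψ ((c : Fin n → F) j) / (Real.sqrt n : ℂ)) * R0 j k *
              (starRingEnd ℂ) (ψ ((c : Fin n → F) k) / (Real.sqrt n : ℂ)) else 0 := by
      intro c
      simp only [Zl, codeMatrix, hres c, hDl c, hR0]
    have hK : ∑ j, ∑ k, ‖R0 j k‖ ^ 2 ≤ (n : ℝ) / η ^ 2 := by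
      have := resolvent_frob (zeroRow ℓ (codeMatrix ψ p n
        (fun i => ((e.symm (0, d') i : Fin n → F))))) hz
      exact this
    have hsplit : ∀ c : C,
        ‖Zl ψ p n (fun i => ((e.symm (c, d') i : Fin n → F))) ℓ z‖ ^ 2
        = ‖z‖ ^ 2 * ‖∑ j, ∑ k, if j ≠ k then
            (ψ ((c : Fin n → F) j) / (Real.sqrt n : ℂ)) * R0 j k *
              (starRingEnd ℂ) (ψ ((c : Fin n → F) k) / (Real.sqrt n : ℂ)) else 0‖ ^ 2 := by
      intro c
      rw [hZl c, norm_mul, mul_pow]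
    calc ∑ c : C, ‖Zl ψ p n (fun i => ((e.symm (c, d') i : Fin n → F))) ℓ z‖ ^ 2
        = ‖z‖ ^ 2 * ∑ c : C, ‖∑ j, ∑ k, if j ≠ k then
            (ψ ((c : Fin n → F) j) / (Real.sqrt n : ℂ)) * R0 j k *
              (starRingEnd ℂ) (ψ ((c : Fin n → F) k) / (Real.sqrt n : ℂ)) else 0‖ ^ 2 := by
          rw [Finset.mul_sum]
          exact Finset.sum_congr rfl fun c _ => hsplit c
      _ ≤ ‖z‖ ^ 2 * ((Fintype.card C) *
            (2 * ∑ j, ∑ k, ‖R0 j k‖ ^ 2) / (n : ℝ) ^ 2) := by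
          have := inner_sum_bound hn C ψ hψ hdual R0
          have h0 : (0:ℝ) ≤ ‖z‖ ^ 2 := by positivity
          exact mul_le_mul_of_nonneg_left this h0
      _ ≤ ‖z‖ ^ 2 * ((Fintype.card C) * (2 * ((n:ℝ) / η ^ 2)) / (n : ℝ) ^ 2) := by
          gcongr
      _ = (Fintype.card C : ℝ) * X := by
          rw [hX]
          field_simp
  have htot : ∑ d : Fin p → C,
      ‖Zl ψ p n (fun i => ((d i : Fin n → F))) ℓ z‖ ^ 2
      ≤ (Fintype.card ({j : Fin p // j ≠ ℓ} → C) : ℝ) * ((Fintype.card C : ℝ) * X) := by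
    rw [hsum]
    calc ∑ d' : {j : Fin p // j ≠ ℓ} → C, ∑ c : C,
        ‖Zl ψ p n (fun i => ((e.symm (c, d') i : Fin n → F))) ℓ z‖ ^ 2
        ≤ ∑ _d' : {j : Fin p // j ≠ ℓ} → C, (Fintype.card C : ℝ) * X :=
          Finset.sum_le_sum fun d' _ => hinner d'
      _ = (Fintype.card ({j : Fin p // j ≠ ℓ} → C) : ℝ) * ((Fintype.card C : ℝ) * X) := by
          rw [Finset.sum_const, Finset.card_univ, nsmul_eq_mul]
  have hcards : (Fintype.card ({j : Fin p // j ≠ ℓ} → C) : ℝ) * (Fintype.card C : ℝ)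
      = (Fintype.card C : ℝ) ^ p := by
    have h1 : Fintype.card (Fin p → C) = Fintype.card (C × ({j : Fin p // j ≠ ℓ} → C)) :=
      Fintype.card_congr e
    rw [Fintype.card_prod, Fintype.card_fun, Fintype.card_fin] at h1
    have h2 : Fintype.card ({j : Fin p // j ≠ ℓ} → C) * Fintype.card C
        = Fintype.card C ^ p := by rw [h1, Nat.mul_comm]
    exact_mod_cast h2
  calc ((Fintype.card C : ℝ) ^ p)⁻¹ *
      ∑ d : Fin p → C, ‖Zl ψ p n (fun i => ((d i : Fin n → F))) ℓ z‖ ^ 2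
      ≤ ((Fintype.card C : ℝ) ^ p)⁻¹ *
        ((Fintype.card ({j : Fin p // j ≠ ℓ} → C) : ℝ) * ((Fintype.card C : ℝ) * X)) := by
        have : (0:ℝ) ≤ ((Fintype.card C : ℝ) ^ p)⁻¹ := by positivity
        exact mul_le_mul_of_nonneg_left htot this
    _ = X := by
        rw [← mul_assoc ((Fintype.card ({j : Fin p // j ≠ ℓ} → C)) : ℝ), hcards,
          ← mul_assoc, inv_mul_cancel₀ (by positivity), one_mul]
    _ ≤ 2 * ‖z‖ ^ 2 / (↑n * z.im ^ 2) := by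
        rw [hX, hη]
end

section
/- Let f: F_{2^m} → F_{2^m} with f(0) = 0, let α be a primitive element of F_{2^m}, n = 2^m − 1, and let C_f be the binary linear code of length n generated by the 2m × n binary matrix H_f whose columns are (α^i, f(α^i)) for i = 0,...,n−1 (each field element written as an m-bit column vector over a fixed F_2-basis). Then the dual code C_f⊥ has minimum distance at least 5 if and only if f is almost perfect nonlinear (APN), i.e., for every nonzero a ∈ F_{2^m} and every b ∈ F_{2^m}, the equation f(x+a) + f(x) = b has at most 2 solutions x. -/
set_option linter.unusedSectionVars false


open Finset

section Aux
variable {F : Type*} [Field F] [Finite F] [CharP F 2]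

lemma char2_add_eq_zero_iff (u v : F) : u + v = 0 ↔ u = v := by
  constructor
  · intro h
    have := CharTwo.add_self_eq_zero v
    have : u + v = v + v := by rw [h, this]
    exact add_right_cancel this
  · rintro rfl; exact CharTwo.add_self_eq_zero u

lemma char2_add_add (u v : F) : u + (u + v) = v := by
  rw [← add_assoc, CharTwo.add_self_eq_zero, zero_add]

/-- From three distinct solutions, build a small Finset with zero sums. -/
lemma aux_exists_T (f : F → F) (hf0 : f 0 = 0)
    (a : F) (ha : a ≠ 0) (c : F)
    (h3 : 3 ≤ Set.ncard {x : F | f (x + a) + f x = c}) :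
    ∃ T : Finset F, (0:F) ∉ T ∧ T.Nonempty ∧ T.card ≤ 4 ∧
      ∑ t ∈ T, t = 0 ∧ ∑ t ∈ T, f t = 0 := by
  classical
  set S : Set F := {x : F | f (x + a) + f x = c} with hS
  have hSfin : S.Finite := Set.toFinite _
  -- S is closed under adding a
  have hclosed : ∀ x ∈ S, x + a ∈ S := by
    intro x hx
    simp only [hS, Set.mem_setOf_eq] at hx ⊢
    rw [add_assoc, CharTwo.add_self_eq_zero, add_zero, add_comm (f x)]
    exact hx
  have hSne : S.Nonempty := by
    rcases S.eq_empty_or_nonempty with h | h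
    · rw [h] at h3; simp at h3
    · exact h
  obtain ⟨x, hx⟩ := hSne
  -- there is y ∈ S with y ≠ x and y ≠ x + a
  have hy : ∃ y ∈ S, y ≠ x ∧ y ≠ x + a := by
    by_contra hcon
    push_neg at hcon
    have hsub : S ⊆ {x, x + a} := by
      intro y hyS
      rcases eq_or_ne y x with rfl | h1
      · exact Set.mem_insert _ _
      have := hcon y hyS h1
      rw [this]
      exact Set.mem_insert_of_mem _ rfl
    have := Set.ncard_le_ncard hsub (Set.toFinite _)
    have h2 : ({x, x + a} : Set F).ncard ≤ 2 := by
      apply le_trans (Set.ncard_insert_le _ _)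
      simp [Set.ncard_singleton]
    omega
  obtain ⟨y, hyS, hyx, hyxa⟩ := hy
  have hxa : x ≠ x + a := by
    intro h
    apply ha
    have := h.symm
    nth_rewrite 2 [← add_zero x] at this
    exact (add_left_cancel this)
  have hya : y ≠ y + a := by
    intro h
    apply ha
    have := h.symm
    nth_rewrite 2 [← add_zero y] at this
    exact (add_left_cancel this)
  have hxya : x ≠ y + a := by
    intro h
    apply hyxa
    rw [h, add_assoc, CharTwo.add_self_eq_zero, add_zero]
  have hxay : x + a ≠ y := fun h => hxya (by rw [← h, add_assoc, CharTwo.add_self_eq_zero, add_zero])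
  have hxaya : x + a ≠ y + a := fun h => hyx (add_right_cancel h).symm
  set T0 : Finset F := {x, x + a, y, y + a} with hT0
  have hmemx : x ∈ T0 := by simp [hT0]
  have hcard0 : T0.card ≤ 4 := by
    apply le_trans (card_insert_le _ _)
    have : ({x + a, y, y + a} : Finset F).card ≤ 3 := by
      apply le_trans (card_insert_le _ _)
      have : ({y, y + a} : Finset F).card ≤ 2 := card_insert_le _ _ |>.trans (by simp)
      omega
    omega
  have hsum0 : ∑ t ∈ T0, t = 0 := by
    rw [hT0]
    rw [sum_insert (by simp [hxa, hyx.symm, hxya]),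
        sum_insert (by simp [hxay, hxaya]),
        sum_insert (by simp [hya]), sum_singleton]
    have h1 : x + a + (y + (y + a)) = x + a + a := by rw [char2_add_add]
    calc x + (x + a + (y + (y + a))) = x + (x + (a + a)) := by
            rw [h1]; ring
      _ = 0 := by rw [char2_add_add, CharTwo.add_self_eq_zero]
  have hfsum0 : ∑ t ∈ T0, f t = 0 := by
    rw [hT0]
    rw [sum_insert (by simp [hxa, hyx.symm, hxya]),
        sum_insert (by simp [hxay, hxaya]),
        sum_insert (by simp [hya]), sum_singleton]
    have h1 : f x + f (x + a) = c := by
      have := hx; simp only [hS, Set.mem_setOf_eq] at this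
      rw [add_comm]; exact this
    have h2 : f y + f (y + a) = c := by
      have := hyS; simp only [hS, Set.mem_setOf_eq] at this
      rw [add_comm]; exact this
    calc f x + (f (x + a) + (f y + f (y + a)))
        = (f x + f (x + a)) + (f y + f (y + a)) := by ring
      _ = c + c := by rw [h1, h2]
      _ = 0 := CharTwo.add_self_eq_zero c
  refine ⟨T0.erase 0, notMem_erase _ _, ?_, ?_, ?_, ?_⟩
  · -- nonempty : at least one of x, x+a is nonzero
    by_cases hx0 : x = 0
    · refine ⟨x + a, mem_erase.mpr ⟨?_, by simp [hT0]⟩⟩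
      rw [hx0, zero_add]; exact ha
    · exact ⟨x, mem_erase.mpr ⟨hx0, hmemx⟩⟩
  · exact le_trans (card_le_card (erase_subset _ _)) hcard0
  · rw [Finset.sum_erase (f := fun t : F => t) T0 rfl]; exact hsum0
  · rw [Finset.sum_erase (f := f) T0 hf0]; exact hfsum0

end Aux


open Finset

section Aux
variable {F : Type*} [Field F] [Finite F] [CharP F 2]

omit [Finite F] in
lemma char2_add_eq_zero_iff' (u v : F) : u + v = 0 ↔ u = v := by
  constructor
  · intro h
    have h2 : u + v = v + v := by rw [h, CharTwo.add_self_eq_zero]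
    exact add_right_cancel h2
  · rintro rfl; exact CharTwo.add_self_eq_zero u

omit [Finite F] in
lemma char2_add_add' (u v : F) : u + (u + v) = v := by
  rw [← add_assoc, CharTwo.add_self_eq_zero, zero_add]

lemma three_le_ncard' {S : Set F} {x y z : F} (hx : x ∈ S) (hy : y ∈ S) (hz : z ∈ S)
    (hxy : x ≠ y) (hxz : x ≠ z) (hyz : y ≠ z) : 3 ≤ S.ncard := by
  have hsub : ({x, y, z} : Set F) ⊆ S := by
    intro t ht
    rcases ht with rfl | rfl | rfl
    · exact hx
    · exact hy
    · exact hz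
  calc 3 = ({x, y, z} : Set F).ncard :=
        (Set.ncard_eq_three.mpr ⟨x, y, z, hxy, hxz, hyz, rfl⟩).symm
    _ ≤ S.ncard := Set.ncard_le_ncard hsub (Set.toFinite S)

lemma aux_no_T (f : F → F) (hf0 : f 0 = 0)
    (hAPN : ∀ a : F, a ≠ 0 → ∀ c : F, Set.ncard {x : F | f (x + a) + f x = c} ≤ 2)
    (T : Finset F) (h0 : (0:F) ∉ T) (hne : T.Nonempty) (hc : T.card ≤ 4)
    (hs : ∑ t ∈ T, t = 0) (hfs : ∑ t ∈ T, f t = 0) : False := by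
  classical
  have hc1 : 1 ≤ T.card := hne.card_pos
  -- helper to produce contradiction from three distinct solutions
  have key : ∀ a : F, a ≠ 0 → ∀ c : F, ∀ u v w : F,
      f (u + a) + f u = c → f (v + a) + f v = c → f (w + a) + f w = c →
      u ≠ v → u ≠ w → v ≠ w → False := by
    intro a ha c u v w h1 h2 h3 huv huw hvw
    have := three_le_ncard' (S := {x : F | f (x + a) + f x = c}) h1 h2 h3 huv huw hvw
    have := hAPN a ha c
    omega
  interval_cases hcard : T.card
  · -- card 1
    obtain ⟨x, hx⟩ := Finset.card_eq_one.mp hcard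
    rw [hx, sum_singleton] at hs
    rw [hx, hs] at h0
    exact h0 (mem_singleton_self 0)
  · -- card 2
    obtain ⟨x, y, hxy, hx⟩ := Finset.card_eq_two.mp hcard
    rw [hx, sum_insert (by simp [hxy]), sum_singleton] at hs
    exact hxy ((char2_add_eq_zero_iff' x y).mp hs)
  · -- card 3
    obtain ⟨x, y, z, hxy, hxz, hyz, hT⟩ := Finset.card_eq_three.mp hcard
    rw [hT, sum_insert (by simp [hxy, hxz]), sum_insert (by simp [hyz]), sum_singleton] at hs
    rw [hT, sum_insert (by simp [hxy, hxz]), sum_insert (by simp [hyz]), sum_singleton] at hfs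
    have hx0 : x ≠ 0 := fun h => h0 (by rw [hT, ← h]; simp)
    have hy0 : y ≠ 0 := fun h => h0 (by rw [hT, ← h]; simp)
    have ha : x + y ≠ 0 := fun h => hxy ((char2_add_eq_zero_iff' x y).mp h)
    have hz' : x + y = z := by
      have h' : (x + y) + z = 0 := by rw [add_assoc]; exact hs
      exact (char2_add_eq_zero_iff' _ _).mp h'
    have hfz : f x + f y = f z := by
      have h' : (f x + f y) + f z = 0 := by rw [add_assoc]; exact hfs
      exact (char2_add_eq_zero_iff' _ _).mp h'
    refine key (x + y) ha (f x + f y) 0 x y ?_ ?_ ?_ (Ne.symm hx0) (Ne.symm hy0) hxy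
    · rw [zero_add, hf0, add_zero, hz', hfz]
    · rw [char2_add_add', add_comm]
    · rw [add_comm x y, char2_add_add']
  · -- card 4
    obtain ⟨x, hxT⟩ := hne
    have hcard' : (T.erase x).card = 3 := by rw [Finset.card_erase_of_mem hxT, hcard]
    obtain ⟨y, z, w, hyz, hyw, hzw, hT'⟩ := Finset.card_eq_three.mp hcard'
    have hxy : x ≠ y := by
      intro h
      apply Finset.notMem_erase x T
      rw [hT', h]; simp
    have hxz : x ≠ z := by
      intro h
      apply Finset.notMem_erase x T
      rw [hT', h]; simp
    have hxw : x ≠ w := by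
      intro h
      apply Finset.notMem_erase x T
      rw [hT', h]; simp
    have hsum4 : x + (y + (z + w)) = 0 := by
      rw [← Finset.add_sum_erase T _ hxT, hT',
        sum_insert (by simp [hyz, hyw]), sum_insert (by simp [hzw]), sum_singleton] at hs
      exact hs
    have hfsum4 : f x + (f y + (f z + f w)) = 0 := by
      rw [← Finset.add_sum_erase T _ hxT, hT',
        sum_insert (by simp [hyz, hyw]), sum_insert (by simp [hzw]), sum_singleton] at hfs
      exact hfs
    have ha : x + y ≠ 0 := fun h => hxy ((char2_add_eq_zero_iff' x y).mp h)
    have hw : x + (y + z) = w := by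
      apply (char2_add_eq_zero_iff' _ _).mp
      calc (x + (y + z)) + w = x + (y + (z + w)) := by ring
        _ = 0 := hsum4
    have hfzw : f z + f w = f x + f y := by
      apply (char2_add_eq_zero_iff' _ _).mp
      calc (f z + f w) + (f x + f y) = f x + (f y + (f z + f w)) := by ring
        _ = 0 := hfsum4
    refine key (x + y) ha (f x + f y) x y z ?_ ?_ ?_ hxy hxz hyz
    · rw [char2_add_add', add_comm]
    · rw [add_comm x y, char2_add_add']
    · have hz : z + (x + y) = w := by rw [← hw]; ring
      rw [hz, add_comm (f w) (f z), hfzw]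


open Finset

lemma log_facts {F : Type*} [Field F] [Fintype F] {mcard : ℕ}
    (hcard : Fintype.card F = 2 ^ mcard) (hm : 0 < mcard)
    (α : F) (hα : ∀ x : F, x ≠ 0 → ∃ i : ℕ, α ^ i = x) :
    (∀ i : Fin (2 ^ mcard - 1), α ^ (i : ℕ) ≠ 0) ∧
    (∀ i j : Fin (2 ^ mcard - 1), α ^ (i : ℕ) = α ^ (j : ℕ) → i = j) ∧
    (∀ x : F, x ≠ 0 → ∃ i : Fin (2 ^ mcard - 1), α ^ (i : ℕ) = x) := by
  classical
  set n := 2 ^ mcard - 1 with hn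
  have h2m : 2 ≤ 2 ^ mcard := by
    calc 2 = 2 ^ 1 := (pow_one 2).symm
    _ ≤ 2 ^ mcard := Nat.pow_le_pow_right (by omega) hm
  have hn1 : 1 ≤ n := by omega
  by_cases hα0 : α = 0
  · -- degenerate case: the field must be F_2 and n = 1
    have hone : ∀ x : F, x ≠ 0 → x = 1 := by
      intro x hx
      obtain ⟨i, hi⟩ := hα x hx
      rcases Nat.eq_zero_or_pos i with rfl | hi0
      · rw [pow_zero] at hi; exact hi.symm
      · rw [hα0, zero_pow (by omega)] at hi; exact absurd hi.symm hx
    have hcard2 : Fintype.card F ≤ 2 := by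
      have hsub : (univ : Finset F) ⊆ {0, 1} := by
        intro x _
        rcases eq_or_ne x 0 with rfl | hx
        · simp
        · simp [hone x hx]
      calc Fintype.card F = (univ : Finset F).card := rfl
        _ ≤ ({0, 1} : Finset F).card := card_le_card hsub
        _ ≤ 2 := card_insert_le _ _ |>.trans (by simp)
    have hne1 : n = 1 := by rw [hcard] at hcard2; omega
    have hval : ∀ i : Fin n, (i : ℕ) = 0 := by
      intro i
      have := i.isLt
      omega
    refine ⟨?_, ?_, ?_⟩
    · intro i; rw [hval i, pow_zero]; exact one_ne_zero
    · intro i j _; exact Fin.ext (by rw [hval i, hval j])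
    · intro x hx
      exact ⟨⟨0, by omega⟩, by simpa using (hone x hx).symm⟩
  · have hpow_ne : ∀ i : Fin n, α ^ (i : ℕ) ≠ 0 := fun i => pow_ne_zero _ hα0
    have hαn : α ^ n = 1 := by
      have := FiniteField.pow_card_sub_one_eq_one α hα0
      rwa [hcard] at this
    have hmod : ∀ i : ℕ, α ^ (i % n) = α ^ i := by
      intro i
      conv_rhs => rw [← Nat.mod_add_div i n]
      rw [pow_add, pow_mul, hαn, one_pow, mul_one]
    refine ⟨hpow_ne, ?_, ?_⟩
    · -- injectivity
      have main : ∀ i j : Fin n, (i : ℕ) ≤ (j : ℕ) → α ^ (i : ℕ) = α ^ (j : ℕ) → i = j := by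
        intro i j hij h
        set d := (j : ℕ) - (i : ℕ) with hd
        rcases Nat.eq_zero_or_pos d with hd0 | hd0
        · exact Fin.ext (by omega)
        exfalso
        have hdn : d < n := by have := j.isLt; omega
        have hαd : α ^ d = 1 := by
          have h1 : α ^ (j : ℕ) = α ^ (i : ℕ) * α ^ d := by
            rw [← pow_add]
            congr 1
            omega
          rw [← h, eq_comm] at h1
          rcases mul_right_eq_self₀.mp h1 with h2 | h2
          · exact h2
          · exact absurd h2 (pow_ne_zero _ hα0)
        have hmodd : ∀ e : ℕ, α ^ (e % d) = α ^ e := by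
          intro e
          conv_rhs => rw [← Nat.mod_add_div e d]
          rw [pow_add, pow_mul, hαd, one_pow, mul_one]
        have hsub : (univ : Finset F).erase 0 ⊆ (Finset.range d).image (fun k => α ^ k) := by
          intro x hx
          have hx0 : x ≠ 0 := (mem_erase.mp hx).1
          obtain ⟨e, he⟩ := hα x hx0
          exact mem_image.mpr ⟨e % d, mem_range.mpr (Nat.mod_lt _ hd0), by rw [hmodd]; exact he⟩
        have h1 : ((univ : Finset F).erase 0).card = 2 ^ mcard - 1 := by
          rw [card_erase_of_mem (mem_univ 0), card_univ, hcard]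
        have h2 : ((Finset.range d).image (fun k => α ^ k)).card ≤ d :=
          (card_image_le).trans (by rw [card_range])
        have := card_le_card hsub
        omega
      intro i j h
      rcases le_total (i : ℕ) (j : ℕ) with hle | hle
      · exact main i j hle h
      · exact (main j i hle h.symm).symm
    · intro x hx
      obtain ⟨i, hi⟩ := hα x hx
      exact ⟨⟨i % n, Nat.mod_lt _ (by omega)⟩, by simpa [hmod] using hi⟩

open Matrix in
/-- Let `f : F_{2^m} → F_{2^m}` with `f(0) = 0`, `α` a primitive element, `n = 2^m − 1`,
and `C_f` the binary code generated by the matrix `H_f` whose `i`-th column is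
`(α^i, f(α^i))` written over a fixed `F_2`-basis. Then the dual code `C_f⊥` (the code
with parity check matrix `H_f`) has minimum distance at least 5 if and only if `f` is
almost perfect nonlinear (APN). -/
theorem dual_distance_ge_five_iff_APN
    (m : ℕ) (hm : 0 < m)
    (f : GaloisField 2 m → GaloisField 2 m) (hf0 : f 0 = 0)
    (α : GaloisField 2 m) (hα : ∀ x : GaloisField 2 m, x ≠ 0 → ∃ i : ℕ, α ^ i = x)
    (b : Module.Basis (Fin m) (ZMod 2) (GaloisField 2 m)) :
    let n := 2 ^ m - 1
    let H : Matrix (Fin m ⊕ Fin m) (Fin n) (ZMod 2) := fun r i =>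
      Sum.elim (fun r1 => b.repr (α ^ (i : ℕ)) r1) (fun r2 => b.repr (f (α ^ (i : ℕ))) r2) r
    (∀ v : Fin n → ZMod 2, H.mulVec v = 0 → v ≠ 0 → 5 ≤ hammingNorm v) ↔
      (∀ a : GaloisField 2 m, a ≠ 0 → ∀ c : GaloisField 2 m,
        Set.ncard {x : GaloisField 2 m | f (x + a) + f x = c} ≤ 2) := by
  intro n H
  classical
  haveI : Fintype (GaloisField 2 m) := Fintype.ofFinite _
  have hcard : Fintype.card (GaloisField 2 m) = 2 ^ m := by
    rw [← Nat.card_eq_fintype_card]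
    exact GaloisField.card 2 m hm.ne'
  obtain ⟨hpow_ne, hinj, hsurj⟩ := log_facts hcard hm α hα
  have h2m : 2 ≤ 2 ^ m := by
    calc 2 = 2 ^ 1 := (pow_one 2).symm
    _ ≤ 2 ^ m := Nat.pow_le_pow_right (by omega) hm
  have hn1 : 1 ≤ n := by simp only [n]; omega
  have hv01 : ∀ c : ZMod 2, c = 0 ∨ c = 1 := by decide
  -- key reformulation of the parity-check condition
  have hkey : ∀ v : Fin n → ZMod 2, H.mulVec v = 0 ↔
      ((∑ i : Fin n, v i • α ^ (i : ℕ)) = 0 ∧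
       (∑ i : Fin n, v i • f (α ^ (i : ℕ))) = 0) := by
    intro v
    have hA : ∀ r1 : Fin m,
        H.mulVec v (Sum.inl r1) = b.repr (∑ i : Fin n, v i • α ^ (i : ℕ)) r1 := by
      intro r1
      simp only [Matrix.mulVec, dotProduct, H, Sum.elim_inl, map_sum, _root_.map_smul,
        Finsupp.coe_finset_sum, Finset.sum_apply, Finsupp.coe_smul, Pi.smul_apply, smul_eq_mul]
      exact Finset.sum_congr rfl fun i _ => mul_comm _ _
    have hB : ∀ r2 : Fin m,
        H.mulVec v (Sum.inr r2) = b.repr (∑ i : Fin n, v i • f (α ^ (i : ℕ))) r2 := by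
      intro r2
      simp only [Matrix.mulVec, dotProduct, H, Sum.elim_inr, map_sum, _root_.map_smul,
        Finsupp.coe_finset_sum, Finset.sum_apply, Finsupp.coe_smul, Pi.smul_apply, smul_eq_mul]
      exact Finset.sum_congr rfl fun i _ => mul_comm _ _
    constructor
    · intro h
      constructor
      · apply (LinearEquiv.map_eq_zero_iff b.repr).mp
        ext r1
        rw [← hA r1, h]
        simp
      · apply (LinearEquiv.map_eq_zero_iff b.repr).mp
        ext r2
        rw [← hB r2, h]
        simp
    · rintro ⟨h1, h2⟩
      funext r
      cases r with
      | inl r1 => rw [hA r1, h1]; simp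
      | inr r2 => rw [hB r2, h2]; simp
  -- support reformulation of the sums
  have hsupp : ∀ (v : Fin n → ZMod 2) (g : Fin n → GaloisField 2 m),
      ∑ i : Fin n, v i • g i = ∑ i ∈ Finset.univ.filter (fun i => v i ≠ 0), g i := by
    intro v g
    rw [Finset.sum_filter]
    apply Finset.sum_congr rfl
    intro i _
    rcases hv01 (v i) with h | h
    · rw [h]; simp
    · rw [h]; simp
  have hnorm : ∀ v : Fin n → ZMod 2,
      hammingNorm v = (Finset.univ.filter (fun i => v i ≠ 0)).card := fun v => rfl
  constructor
  · -- distance ≥ 5 → APN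
    intro hdist a ha c
    by_contra hcon
    have h3 : 3 ≤ Set.ncard {x : GaloisField 2 m | f (x + a) + f x = c} := by omega
    obtain ⟨T, h0, hTne, hTc, hTs, hTfs⟩ := aux_exists_T f hf0 a ha c h3
    have hlog' : ∀ x : GaloisField 2 m, ∃ i : Fin n, x ≠ 0 → α ^ (i : ℕ) = x := by
      intro x
      by_cases hx : x = 0
      · exact ⟨⟨0, hn1⟩, fun h => absurd hx h⟩
      · obtain ⟨i, hi⟩ := hsurj x hx
        exact ⟨i, fun _ => hi⟩
    choose log hlog using hlog'
    set I : Finset (Fin n) := T.image log with hI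
    have hinjOn : ∀ t1 ∈ T, ∀ t2 ∈ T, log t1 = log t2 → t1 = t2 := by
      intro t1 h1 t2 h2 he
      have e1 := hlog t1 (fun h => h0 (h ▸ h1))
      have e2 := hlog t2 (fun h => h0 (h ▸ h2))
      rw [← e1, ← e2, he]
    set v : Fin n → ZMod 2 := fun i => if i ∈ I then 1 else 0 with hv
    have hvfilter : Finset.univ.filter (fun i => v i ≠ 0) = I := by
      ext i
      by_cases hi : i ∈ I <;> simp [hv, hi]
    have hcardI : I.card = T.card := Finset.card_image_of_injOn hinjOn
    have hvne : v ≠ 0 := by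
      obtain ⟨t, ht⟩ := hTne
      intro h
      have h1 : v (log t) = 0 := congrFun h (log t)
      have h2 : log t ∈ I := Finset.mem_image_of_mem _ ht
      rw [hv] at h1
      simp only [h2, if_pos] at h1
      exact one_ne_zero h1
    have hsum1 : ∑ i : Fin n, v i • α ^ (i : ℕ) = 0 := by
      rw [hsupp, hvfilter, hI, Finset.sum_image hinjOn, ← hTs]
      exact Finset.sum_congr rfl fun t ht => hlog t (fun h => h0 (h ▸ ht))
    have hsum2 : ∑ i : Fin n, v i • f (α ^ (i : ℕ)) = 0 := by
      rw [hsupp, hvfilter, hI, Finset.sum_image hinjOn, ← hTfs]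
      exact Finset.sum_congr rfl fun t ht => by
        rw [hlog t (fun h => h0 (h ▸ ht))]
    have h5 := hdist v ((hkey v).mpr ⟨hsum1, hsum2⟩) hvne
    rw [hnorm, hvfilter, hcardI] at h5
    omega
  · -- APN → distance ≥ 5
    intro hAPN v hv hvne
    by_contra hlt
    push_neg at hlt
    set S := Finset.univ.filter (fun i => v i ≠ 0) with hS
    obtain ⟨hs1, hs2⟩ := (hkey v).mp hv
    rw [hsupp] at hs1 hs2
    set T := S.image (fun i : Fin n => α ^ (i : ℕ)) with hT
    have hinjOn : ∀ i ∈ S, ∀ j ∈ S, α ^ (i : ℕ) = α ^ (j : ℕ) → i = j :=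
      fun i _ j _ h => hinj i j h
    have h0T : (0 : GaloisField 2 m) ∉ T := by
      rw [hT]
      intro hmem
      obtain ⟨i, -, h⟩ := Finset.mem_image.mp hmem
      exact hpow_ne i h
    have hTne : T.Nonempty := by
      obtain ⟨i, hi⟩ := Function.ne_iff.mp hvne
      exact ⟨α ^ (i : ℕ), Finset.mem_image_of_mem _ (by simp [hS]; exact hi)⟩
    have hTc : T.card ≤ 4 := by
      have hc1 : T.card = S.card := Finset.card_image_of_injOn hinjOn
      have hc2 : hammingNorm v = S.card := hnorm v
      omega
    have hTs : ∑ t ∈ T, t = 0 := by rw [hT, Finset.sum_image hinjOn]; exact hs1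
    have hTfs : ∑ t ∈ T, f t = 0 := by rw [hT, Finset.sum_image hinjOn]; exact hs2
    exact aux_no_T f hf0 hAPN T h0T hTne hTc hTs hTfs
end Aux
end
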